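/- arXiv:0906.1165 — 3 statements merged into one kernel-verified Lean document; each statement's English description precedes it below -/
import Mathlib

section
/- Let n ≥ 1 and let Π be a permutation of {1,…,n}, and let Ḡ = G[Π] be the associated permutation graph (i ~ j in G[Π] iff (i−j)(Π⁻¹(i)−Π⁻¹(j)) < 0). Let C ⊆ {1,…,n} be an independent set of G[Π], enumerated as u₁, u₂, …, u_p so that Π⁻¹(u₁) < Π⁻¹(u₂) < ⋯ < Π⁻¹(u_p). For a vertex v ∉ C that has at least one neighbor in C, let l be the smallest and r the largest index t with u_t adjacent to v in G[Π]. Then v is adjacent in G[Π] to u_t for every t with l ≤ t ≤ r; i.e., the set of indices of C-vertices adjacent to v is exactly the integer interval {t : l ≤ t ≤ r}. -/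
/-- The permutation graph `G[Π]` on `Fin n`: `i ~ j` iff `(i-j)(Π⁻¹ i - Π⁻¹ j) < 0`. -/
def permGraph (n : ℕ) (π : Equiv.Perm (Fin n)) : SimpleGraph (Fin n) where
  Adj i j := ((i : ℤ) - (j : ℤ)) * ((π.symm i : ℤ) - ((π.symm j : ℤ))) < 0
  symm := by
    constructor
    intro i j h
    have e : ((j : ℤ) - (i : ℤ)) * ((π.symm j : ℤ) - (π.symm i : ℤ))
        = ((i : ℤ) - (j : ℤ)) * ((π.symm i : ℤ) - (π.symm j : ℤ)) := by ring
    simp only [e]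
    exact h
  loopless := by constructor; intro i; simp

/-- A set of vertices is stable (independent) if no two of its members are adjacent. -/
def IsStableSet {V : Type*} (G : SimpleGraph V) (s : Set V) : Prop :=
  s.Pairwise fun a b => ¬ G.Adj a b

/-- A finite graph is a threshold graph if there are nonnegative vertex weights and a
threshold `t` such that a set of vertices is stable iff its total weight is at most `t`. -/
def IsThresholdGraph {V : Type*} [Fintype V] (G : SimpleGraph V) : Prop :=
  ∃ (w : V → ℝ) (t : ℝ), (∀ v, 0 ≤ w v) ∧
    ∀ U : Finset V, ((∑ v ∈ U, w v) ≤ t ↔ IsStableSet G ↑U)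

/-- A graph is a permutation graph if it is isomorphic to `permGraph n π` for some
permutation `π` of `Fin n`. -/
def IsPermutationGraph {V : Type*} (G : SimpleGraph V) : Prop :=
  ∃ (n : ℕ) (π : Equiv.Perm (Fin n)), Nonempty (G ≃g permGraph n π)

/-- The threshold dimension of `G`: the least `k` such that the edge set of `G` is the
union of the edge sets of `k` threshold graphs on `V(G)`. -/
noncomputable def thresholdDim {V : Type*} [Fintype V] (G : SimpleGraph V) : ℕ :=
  sInf {k | ∃ T : Fin k → SimpleGraph V,
    (∀ i, IsThresholdGraph (T i)) ∧ (⋃ i, (T i).edgeSet) = G.edgeSet}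

/-- The independence number `α(G)`. -/
noncomputable def alphaNum {V : Type*} [Fintype V] (G : SimpleGraph V) : ℕ :=
  sSup {k | ∃ s : Finset V, s.card = k ∧ IsStableSet G ↑s}

/-- The graph `mK₂`: a perfect matching on `2m` vertices. -/
def matchingGraph (m : ℕ) : SimpleGraph (Fin m × Bool) where
  Adj a b := a.1 = b.1 ∧ a.2 ≠ b.2
  symm := by constructor; rintro a b ⟨h1, h2⟩; exact ⟨h1.symm, h2.symm⟩
  loopless := by constructor; rintro a ⟨h1, h2⟩; exact h2 rfl

/-!
`i` and `j` are adjacent in `G[Π]` exactly when the points `(i, Π⁻¹ i)` and `(j, Π⁻¹ j)` are in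
opposite order in the two coordinates. Non-adjacent vertices ordered by `Π⁻¹` are therefore ordered by value too, so an
independent set listed by `Π⁻¹` is a chain in both coordinates; a point in opposite order to both
ends of a chain is in opposite order to everything between them.
-/

namespace permGraph

variable {n : ℕ} {π : Equiv.Perm (Fin n)}

theorem adj_iff {i j : Fin n} :
    (permGraph n π).Adj i j ↔ i < j ∧ π.symm j < π.symm i ∨ j < i ∧ π.symm i < π.symm j := by
  change ((i : ℤ) - j) * ((π.symm i : ℤ) - π.symm j) < 0 ↔ _
  rw [mul_neg_iff]
  simp only [sub_pos, sub_neg, Nat.cast_lt, Fin.val_fin_lt]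
  tauto

theorem adj_of_adj_of_le_of_le {x a b c : Fin n} (hab : a ≤ b) (hbc : b ≤ c)
    (hab' : π.symm a ≤ π.symm b) (hbc' : π.symm b ≤ π.symm c)
    (ha : (permGraph n π).Adj x a) (hc : (permGraph n π).Adj x c) :
    (permGraph n π).Adj x b := by
  rw [adj_iff] at *
  omega

theorem le_of_not_adj {i j : Fin n} (h : ¬ (permGraph n π).Adj i j)
    (hπ : π.symm i < π.symm j) : i ≤ j :=
  not_lt.1 fun hji => h (adj_iff.2 (Or.inr ⟨hji, hπ⟩))

theorem strictMono_of_isStableSet {ι : Type*} [Preorder ι] {u : ι → Fin n}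
    (hC : IsStableSet (permGraph n π) (Set.range u)) (hord : StrictMono (π.symm ∘ u)) :
    StrictMono u := by
  intro s t hst
  have hπ : π.symm (u s) < π.symm (u t) := hord hst
  have hne : u s ≠ u t := fun h => hπ.ne (congrArg π.symm h)
  exact (le_of_not_adj (hC ⟨s, rfl⟩ ⟨t, rfl⟩ hne) hπ).lt_of_ne hne

end permGraph

theorem index_set_is_interval_general
    (n : ℕ) (π : Equiv.Perm (Fin n))
    (p : ℕ) (u : Fin p → Fin n)
    (hC : IsStableSet (permGraph n π) (Set.range u))
    (hord : ∀ s t : Fin p, s < t → π.symm (u s) < π.symm (u t))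
    (v : Fin n)
    (l r : Fin p)
    (hl : (permGraph n π).Adj v (u l))
    (hlmin : ∀ t : Fin p, (permGraph n π).Adj v (u t) → l ≤ t)
    (hr : (permGraph n π).Adj v (u r))
    (hrmax : ∀ t : Fin p, (permGraph n π).Adj v (u t) → t ≤ r) :
    ∀ t : Fin p, (permGraph n π).Adj v (u t) ↔ (l ≤ t ∧ t ≤ r) := by
  have hordπ : StrictMono (π.symm ∘ u) := fun s t => hord s t
  have hu : Monotone u := (permGraph.strictMono_of_isStableSet hC hordπ).monotone
  intro t
  refine ⟨fun h => ⟨hlmin t h, hrmax t h⟩, fun ⟨hlt, htr⟩ => ?_⟩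
  exact permGraph.adj_of_adj_of_le_of_le (hu hlt) (hu htr)
    (hordπ.monotone hlt) (hordπ.monotone htr) hl hr

/-- Lemma 2 (index sets are intervals): for a permutation graph `G[Π]`, an independent set
enumerated in increasing order of `Π⁻¹`, and a vertex `v` outside it with at least one
neighbour inside, the set of indices of neighbours of `v` is exactly the integer interval
between the minimum index `l` and the maximum index `r`. -/
theorem index_set_is_interval
    (n : ℕ) (hn : 1 ≤ n) (π : Equiv.Perm (Fin n))
    (p : ℕ) (u : Fin p → Fin n)
    (hinj : Function.Injective u)
    (hC : IsStableSet (permGraph n π) (Set.range u))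
    (hord : ∀ s t : Fin p, s < t → π.symm (u s) < π.symm (u t))
    (v : Fin n) (hv : v ∉ Set.range u)
    (l r : Fin p)
    (hl : (permGraph n π).Adj v (u l))
    (hlmin : ∀ t : Fin p, (permGraph n π).Adj v (u t) → l ≤ t)
    (hr : (permGraph n π).Adj v (u r))
    (hrmax : ∀ t : Fin p, (permGraph n π).Adj v (u t) → t ≤ r) :
    ∀ t : Fin p, (permGraph n π).Adj v (u t) ↔ (l ≤ t ∧ t ≤ r) :=
  index_set_is_interval_general n π p u hC hord v l r hl hlmin hr hrmax
end

section
/- Let n ≥ 1, let Π be a permutation of {1,…,n} and G[Π] the associated permutation graph. Let C be an independent set of G[Π] enumerated as u₁, …, u_p with Π⁻¹(u₁) < ⋯ < Π⁻¹(u_p). Let x = u_q ∈ C and let y ∉ C be a vertex that is not adjacent to x in G[Π] but has at least one neighbor in C, and let l and r be respectively the smallest and largest index t with u_t adjacent to y. Then: (1) if Π⁻¹(x) > Π⁻¹(y), then q > r; (2) if Π⁻¹(x) < Π⁻¹(y), then q < l. -/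
/-!
Between two vertices of `G[Π]` ordered by `Π⁻¹`, adjacency means that their labels are in the
reverse order and non-adjacency that they are in the same order. Hence a stable set listed by
`Π⁻¹` is also listed by label. In case (1), if `q ≤ r` then `q < r` (as `u r ~ y ≁ u q`), and
`y < u q < u r < y`: the first step since `y ≁ u q`, the second by stability, the third since
`y ~ u r`. Case (2) is the mirror image.
-/

section PermGraph

variable {n : ℕ} {π : Equiv.Perm (Fin n)}

theorem permGraph_adj_iff_lt_of_symm_lt {a b : Fin n} (h : π.symm a < π.symm b) :
    (permGraph n π).Adj a b ↔ b < a := by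
  have hneg : ((π.symm a : ℕ) : ℤ) - (π.symm b : ℕ) < 0 := by
    rw [Fin.lt_def] at h; omega
  change _ * _ < 0 ↔ _
  rw [mul_neg_iff, Fin.lt_def]
  constructor
  · rintro (⟨hab, -⟩ | ⟨-, hpos⟩) <;> omega
  · intro hba; left; omega

theorem permGraph_not_adj_iff_lt_of_symm_lt {a b : Fin n} (h : π.symm a < π.symm b) :
    ¬ (permGraph n π).Adj a b ↔ a < b := by
  have hab : a ≠ b := by rintro rfl; exact h.false
  rw [permGraph_adj_iff_lt_of_symm_lt h, not_lt, le_iff_lt_or_eq, or_iff_left hab]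

theorem strictMono_of_isStableSet_permGraph {p : ℕ} {u : Fin p → Fin n}
    (hC : IsStableSet (permGraph n π) (Set.range u))
    (hord : ∀ s t : Fin p, s < t → π.symm (u s) < π.symm (u t)) :
    StrictMono u := fun s t hst =>
  (permGraph_not_adj_iff_lt_of_symm_lt (hord s t hst)).1 <|
    hC ⟨s, rfl⟩ ⟨t, rfl⟩ (fun h => (hord s t hst).ne (congrArg π.symm h))

end PermGraph

theorem index_position_of_nonneighbor_general
    (n : ℕ) (π : Equiv.Perm (Fin n))
    (p : ℕ) (u : Fin p → Fin n)
    (hC : IsStableSet (permGraph n π) (Set.range u))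
    (hord : ∀ s t : Fin p, s < t → π.symm (u s) < π.symm (u t))
    (q : Fin p) (y : Fin n)
    (hxy : ¬ (permGraph n π).Adj (u q) y)
    (l r : Fin p)
    (hl : (permGraph n π).Adj y (u l))
    (hr : (permGraph n π).Adj y (u r)) :
    (π.symm y < π.symm (u q) → r < q) ∧ (π.symm (u q) < π.symm y → q < l) := by
  have hu := strictMono_of_isStableSet_permGraph hC hord
  constructor
  · intro hyq
    by_contra! hqr
    have hq_lt_r : q < r := hqr.lt_of_ne (by rintro rfl; exact hxy hr.symm)
    have hy_lt : y < u q := (permGraph_not_adj_iff_lt_of_symm_lt hyq).1 (hxy ∘ .symm)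
    have hr_lt : u r < y :=
      (permGraph_adj_iff_lt_of_symm_lt (hyq.trans (hord q r hq_lt_r))).1 hr
    exact (hy_lt.trans (hu hq_lt_r)).not_gt hr_lt
  · intro hqy
    by_contra! hlq
    have hl_lt_q : l < q := hlq.lt_of_ne (by rintro rfl; exact hxy hl.symm)
    have hq_lt : u q < y := (permGraph_not_adj_iff_lt_of_symm_lt hqy).1 hxy
    have hl_lt : y < u l :=
      (permGraph_adj_iff_lt_of_symm_lt ((hord l q hl_lt_q).trans hqy)).1 hl.symm
    exact ((hu hl_lt_q).trans hq_lt).not_gt hl_lt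

/-- Observation 1: for a permutation graph `G[Π]`, an independent set enumerated in
increasing order of `Π⁻¹`, a member `x = u q` of it and a vertex `y` outside it, not
adjacent to `x` but with at least one neighbour inside (with minimum index `l` and
maximum index `r`): if `Π⁻¹ x > Π⁻¹ y` then `q > r`, and if `Π⁻¹ x < Π⁻¹ y`
then `q < l`. -/
theorem index_position_of_nonneighbor
    (n : ℕ) (hn : 1 ≤ n) (π : Equiv.Perm (Fin n))
    (p : ℕ) (u : Fin p → Fin n)
    (hinj : Function.Injective u)
    (hC : IsStableSet (permGraph n π) (Set.range u))
    (hord : ∀ s t : Fin p, s < t → π.symm (u s) < π.symm (u t))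
    (q : Fin p) (y : Fin n) (hy : y ∉ Set.range u)
    (hxy : ¬ (permGraph n π).Adj (u q) y)
    (l r : Fin p)
    (hl : (permGraph n π).Adj y (u l))
    (hlmin : ∀ t : Fin p, (permGraph n π).Adj y (u t) → l ≤ t)
    (hr : (permGraph n π).Adj y (u r))
    (hrmax : ∀ t : Fin p, (permGraph n π).Adj y (u t) → t ≤ r) :
    (π.symm y < π.symm (u q) → r < q) ∧ (π.symm (u q) < π.symm y → q < l) :=
  index_position_of_nonneighbor_general n π p u hC hord q y hxy l r hl hr
end

section
/- Let G be a permutation graph on n vertices and let Ḡ denote its complement. For every proper vertex coloring of Ḡ with color classes C₁, …, C_k, there exist threshold graphs T₁, …, T_k on the vertex set of G such that E(Ḡ) ⊆ E(T_j) for every j (each T_j is a supergraph of Ḡ) and E(Ḡ) = E(T₁) ∩ E(T₂) ∩ ⋯ ∩ E(T_k), i.e., Ḡ is the intersection of the k threshold graphs T₁, …, T_k. -/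
section PairSumGraph

variable {V : Type*}

def pairSumGraph (f : V → ℕ) (m : ℕ) : SimpleGraph V where
  Adj u v := u ≠ v ∧ m < f u + f v
  symm := ⟨fun _ _ h => ⟨h.1.symm, by rw [add_comm]; exact h.2⟩⟩
  loopless := ⟨fun _ h => h.1 rfl⟩

lemma isThresholdGraph_of_weights [Fintype V] {G : SimpleGraph V} (w : V → ℝ) (t : ℝ)
    (hw : ∀ v, 0 ≤ w v) (hadj : ∀ u v, G.Adj u v → t < w u + w v)
    (hstable : ∀ U : Finset V, IsStableSet G U → ∑ v ∈ U, w v ≤ t) :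
    IsThresholdGraph G := by
  classical
  refine ⟨w, t, hw, fun U => ⟨fun hsum u hu v hv huv huvAdj => ?_, hstable U⟩⟩
  have hpair : w u + w v ≤ ∑ x ∈ U, w x := by
    rw [← Finset.sum_pair huv]
    refine Finset.sum_le_sum_of_subset_of_nonneg ?_ fun x _ _ => hw x
    simpa [Finset.insert_subset_iff] using ⟨hu, hv⟩
  linarith [hadj u v huvAdj]

variable (V) [Fintype V] (m : ℕ)

noncomputable def pairSumThreshold : ℝ :=
  2 * Fintype.card V * ((Fintype.card V : ℝ) + 1) ^ (m + 1) + 1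

variable {V} (f : V → ℕ)

/-- With `N = |V|`, `q = N + 1` and `t = pairSumThreshold V m`, a light vertex (`2 f v ≤ m`)
weighs `q ^ (f v + 1)` and a heavy one `t - N q ^ (m + 1 - f v)`. A heavy `h` then overshoots `t`
together with another heavy vertex or with a light `u` such that `f u ≥ m + 1 - f h`, whereas its
at most `N` light non-neighbours weigh at most `q ^ (m + 1 - f h)` each. -/
noncomputable def pairSumWeight (v : V) : ℝ :=
  if 2 * f v ≤ m then ((Fintype.card V : ℝ) + 1) ^ (f v + 1)
  else pairSumThreshold V m - Fintype.card V * ((Fintype.card V : ℝ) + 1) ^ (m + 1 - f v)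

lemma pairSumWeight_nonneg (v : V) : 0 ≤ pairSumWeight m f v := by
  unfold pairSumWeight pairSumThreshold
  split_ifs
  · positivity
  · have : ((Fintype.card V : ℝ) + 1) ^ (m + 1 - f v) ≤ ((Fintype.card V : ℝ) + 1) ^ (m + 1) :=
      pow_le_pow_right₀ (by simp) (Nat.sub_le _ _)
    nlinarith [(Fintype.card V).cast_nonneg (α := ℝ),
      pow_pos (show (0 : ℝ) < Fintype.card V + 1 by positivity) (m + 1)]

lemma pairSumThreshold_lt_pairSumWeight_add {u v : V} (h : (pairSumGraph f m).Adj u v) :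
    pairSumThreshold V m < pairSumWeight m f u + pairSumWeight m f v := by
  obtain ⟨-, huv⟩ := h
  set N : ℝ := (Fintype.card V : ℝ)
  have hN : 0 ≤ N := Nat.cast_nonneg _
  have hpow : ∀ {a b : ℕ}, a ≤ b → (N + 1) ^ a ≤ (N + 1) ^ b :=
    fun hab => pow_le_pow_right₀ (by linarith) hab
  have hpos : ∀ a : ℕ, 0 < (N + 1) ^ a := fun a => by positivity
  have heavy_light : ∀ a b : V, ¬ 2 * f a ≤ m → 2 * f b ≤ m → m < f a + f b →
      pairSumThreshold V m < pairSumWeight m f a + pairSumWeight m f b := by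
    intro a b ha hb hab
    have := hpow (show m + 1 - f a + 1 ≤ f b + 1 by omega)
    rw [pow_succ] at this
    simp only [pairSumWeight, if_neg ha, if_pos hb]
    nlinarith [hpos (m + 1 - f a)]
  by_cases hu : 2 * f u ≤ m <;> by_cases hv : 2 * f v ≤ m
  · omega
  · linarith [heavy_light v u hv hu (by omega)]
  · exact heavy_light u v hu hv huv
  · simp only [pairSumWeight, if_neg hu, if_neg hv, pairSumThreshold]
    nlinarith [hpow (show m + 1 - f u ≤ m + 1 by omega), hpow (show m + 1 - f v ≤ m + 1 by omega),
      hpos (m + 1)]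

lemma sum_pairSumWeight_le_of_isStableSet {U : Finset V}
    (hU : IsStableSet (pairSumGraph f m) U) :
    ∑ v ∈ U, pairSumWeight m f v ≤ pairSumThreshold V m := by
  classical
  set N : ℝ := (Fintype.card V : ℝ)
  have hpow : ∀ {a b : ℕ}, a ≤ b → (N + 1) ^ a ≤ (N + 1) ^ b :=
    fun hab => pow_le_pow_right₀ (by simp [N]) hab
  have hpos : ∀ a : ℕ, 0 < (N + 1) ^ a := fun a => by positivity
  have hcard : ∀ s : Finset V, (s.card : ℝ) ≤ N := fun s => by
    simpa [N] using (Nat.cast_le (α := ℝ)).2 s.card_le_univ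
  by_cases hheavy : ∃ h ∈ U, ¬ 2 * f h ≤ m
  · obtain ⟨h, hhU, hh⟩ := hheavy
    have hrest : ∀ u ∈ U.erase h, pairSumWeight m f u ≤ (N + 1) ^ (m + 1 - f h) := by
      intro u hu
      obtain ⟨huh, huU⟩ := Finset.mem_erase.mp hu
      have hle : f u + f h ≤ m := by
        by_contra hlt
        exact hU (Finset.mem_coe.mpr huU) (Finset.mem_coe.mpr hhU) huh ⟨huh, by omega⟩
      simp only [pairSumWeight, if_pos (show 2 * f u ≤ m by omega)]
      exact hpow (by omega)
    have hsum := Finset.sum_le_card_nsmul _ _ _ hrest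
    rw [nsmul_eq_mul] at hsum
    rw [← Finset.sum_erase_add U _ hhU, pairSumWeight, if_neg hh]
    nlinarith [hcard (U.erase h), hpos (m + 1 - f h)]
  · push Not at hheavy
    have hall : ∀ u ∈ U, pairSumWeight m f u ≤ (N + 1) ^ (m + 1) := by
      intro u hu
      have hlight := hheavy u hu
      simp only [pairSumWeight, if_pos hlight]
      exact hpow (by omega)
    have hsum := Finset.sum_le_card_nsmul _ _ _ hall
    rw [nsmul_eq_mul] at hsum
    simp only [pairSumThreshold]
    nlinarith [hcard U, hpos (m + 1)]

theorem isThresholdGraph_pairSumGraph : IsThresholdGraph (pairSumGraph f m) :=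
  isThresholdGraph_of_weights _ _ (pairSumWeight_nonneg m f)
    (fun _ _ => pairSumThreshold_lt_pairSumWeight_add m f)
    (fun _ => sum_pairSumWeight_le_of_isStableSet m f)

end PairSumGraph

section ChainLevel

variable {V : Type*} [Finite V] (r : V → V → Prop) (C : Set V)

noncomputable def chainRank (v : V) : ℕ := {c ∈ C | r c v ∨ c = v}.ncard

open Classical in
noncomputable def chainLevel (v : V) : ℕ :=
  if v ∈ C then chainRank r C v else 2 * Nat.card V + 1 - chainRank r C v

variable {r C}

lemma chainRank_le_card (v : V) : chainRank r C v ≤ Nat.card V := Set.ncard_le_card _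

lemma chainRank_le_of_rel [IsTrans V r] {u v : V} (h : r u v) :
    chainRank r C u ≤ chainRank r C v :=
  Set.ncard_le_ncard fun c ⟨hc, hcu⟩ =>
    ⟨hc, Or.inl (hcu.elim (fun hcu => _root_.trans hcu h) fun e => e ▸ h)⟩

lemma chainRank_lt_of_not_rel [IsTrans V r] (hC : IsChain r C) {u v : V} (hu : u ∈ C)
    (hv : v ∉ C) (huv : ¬ r u v) : chainRank r C v < chainRank r C u := by
  refine Set.ncard_lt_ncard ((Set.ssubset_iff_of_subset ?_).2 ⟨u, ⟨hu, Or.inr rfl⟩, ?_⟩)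
  · rintro c ⟨hc, hcv⟩
    have hcv : r c v := hcv.resolve_right fun e => hv (e ▸ hc)
    have hcu : c ≠ u := fun e => huv (e ▸ hcv)
    exact ⟨hc, Or.inl ((hC hc hu hcu).resolve_right fun huc => huv (_root_.trans huc hcv))⟩
  · rintro ⟨-, h | rfl⟩
    exacts [huv h, hv hu]

lemma rel_of_chainLevel_add_le [IsTrans V r] (hC : IsChain r C) {u v : V} (hu : u ∈ C)
    (hv : v ∉ C) (h : chainLevel r C u + chainLevel r C v ≤ 2 * Nat.card V + 1) : r u v := by
  by_contra huv
  have hlt := chainRank_lt_of_not_rel hC hu hv huv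
  have hbound := chainRank_le_card (r := r) (C := C) v
  simp only [chainLevel, if_pos hu, if_neg hv] at h
  omega

lemma compl_le_pairSumGraph_chainLevel [IsTrans V r] {G : SimpleGraph V}
    (hG : ∀ u v, G.Adj u v ↔ r u v ∨ r v u) (hC : IsChain r C) :
    Gᶜ ≤ pairSumGraph (chainLevel r C) (2 * Nat.card V + 1) := by
  rintro u v ⟨hne, hnadj⟩
  refine ⟨hne, lt_of_not_ge fun hle => hnadj ((hG u v).2 ?_)⟩
  by_cases hu : u ∈ C <;> by_cases hv : v ∈ C
  · exact hC hu hv hne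
  · exact Or.inl (rel_of_chainLevel_add_le hC hu hv hle)
  · exact Or.inr (rel_of_chainLevel_add_le hC hv hu (by omega))
  · have := chainRank_le_card (r := r) (C := C) u
    have := chainRank_le_card (r := r) (C := C) v
    simp only [chainLevel, if_neg hu, if_neg hv] at hle
    omega

lemma not_adj_pairSumGraph_chainLevel_of_rel [IsTrans V r] {u v : V} (hu : u ∈ C)
    (huv : r u v) : ¬ (pairSumGraph (chainLevel r C) (2 * Nat.card V + 1)).Adj u v := by
  rintro ⟨-, hlt⟩
  have := chainRank_le_card (r := r) (C := C) u
  have := chainRank_le_card (r := r) (C := C) v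
  have := chainRank_le_of_rel (C := C) huv
  by_cases hv : v ∈ C <;> simp only [chainLevel, if_pos hu, hv, if_true, if_false] at hlt <;> omega

theorem iInter_edgeSet_pairSumGraph_chainLevel [IsTrans V r] {G : SimpleGraph V}
    (hG : ∀ u v, G.Adj u v ↔ r u v ∨ r v u) {ι : Type*} {C : ι → Set V}
    (hC : ∀ j, IsChain r (C j)) (hcover : ∀ v, ∃ j, v ∈ C j) :
    ⋂ j, (pairSumGraph (chainLevel r (C j)) (2 * Nat.card V + 1)).edgeSet = Gᶜ.edgeSet := by
  refine subset_antisymm (fun e he => ?_) <|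
    Set.subset_iInter fun j => SimpleGraph.edgeSet_mono (compl_le_pairSumGraph_chainLevel hG (hC j))
  induction e using Sym2.ind with
  | _ u v =>
    simp only [Set.mem_iInter, SimpleGraph.mem_edgeSet] at he
    obtain ⟨j, hj⟩ := hcover u
    refine ⟨(he j).1, fun hadj => ?_⟩
    rcases (hG u v).1 hadj with huv | hvu
    · exact not_adj_pairSumGraph_chainLevel_of_rel hj huv (he j)
    · obtain ⟨i, hi⟩ := hcover v
      exact not_adj_pairSumGraph_chainLevel_of_rel hi hvu (he i).symm

end ChainLevel

lemma permGraph_adj_iff {n : ℕ} {π : Equiv.Perm (Fin n)} {i j : Fin n} :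
    (permGraph n π).Adj i j ↔ (i < j ∧ π.symm j < π.symm i) ∨ (j < i ∧ π.symm i < π.symm j) := by
  change ((i : ℤ) - j) * ((π.symm i : ℤ) - π.symm j) < 0 ↔ _
  simp only [mul_neg_iff, Fin.lt_def]
  omega

lemma IsPermutationGraph.exists_isTrans_adj_iff {V : Type*} {G : SimpleGraph V}
    (hG : IsPermutationGraph G) :
    ∃ r : V → V → Prop, IsTrans V r ∧ ∀ u v, G.Adj u v ↔ r u v ∨ r v u := by
  obtain ⟨n, π, ⟨φ⟩⟩ := hG
  refine ⟨fun u v => φ u < φ v ∧ π.symm (φ v) < π.symm (φ u),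
    ⟨fun _ _ _ h₁ h₂ => ⟨h₁.1.trans h₂.1, h₂.2.trans h₁.2⟩⟩, fun u v => ?_⟩
  rw [← φ.map_adj_iff, permGraph_adj_iff]

lemma isChain_of_isStableSet_compl {V : Type*} {G : SimpleGraph V} {r : V → V → Prop}
    (hG : ∀ u v, G.Adj u v ↔ r u v ∨ r v u) {s : Set V} (hs : IsStableSet Gᶜ s) :
    IsChain r s :=
  fun _ hu _ hv huv => (hG _ _).1 <| by simpa [huv] using hs hu hv huv

/-- For a permutation graph `G` and any proper colouring of its complement `Ḡ` with
colour classes `C 1, …, C k`, there are threshold graphs `T 1, …, T k`, each a supergraph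
of `Ḡ`, whose edge sets intersect exactly in the edge set of `Ḡ`. -/
theorem threshold_cover_from_coloring
    {V : Type*} [Fintype V] (G : SimpleGraph V)
    (hG : IsPermutationGraph G)
    (k : ℕ) (C : Fin k → Set V)
    (hstable : ∀ j, IsStableSet Gᶜ (C j))
    (hpart : ∀ v : V, ∃! j, v ∈ C j) :
    ∃ T : Fin k → SimpleGraph V,
      (∀ j, IsThresholdGraph (T j)) ∧
      (∀ j, Gᶜ.edgeSet ⊆ (T j).edgeSet) ∧
      (⋂ j, (T j).edgeSet) = Gᶜ.edgeSet := by
  obtain ⟨r, _, hr⟩ := hG.exists_isTrans_adj_iff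
  have hchain : ∀ j, IsChain r (C j) := fun j => isChain_of_isStableSet_compl hr (hstable j)
  exact ⟨fun j => pairSumGraph (chainLevel r (C j)) (2 * Nat.card V + 1),
    fun j => isThresholdGraph_pairSumGraph _ _,
    fun j => SimpleGraph.edgeSet_mono (compl_le_pairSumGraph_chainLevel hr (hchain j)),
    iInter_edgeSet_pairSumGraph_chainLevel hr hchain fun v => (hpart v).exists⟩
end
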